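/- Let a_1, a_2 be coprime positive integers and let m be a positive integer. Then g_{m+1}(a_1, a_2, m·a_1·a_2) = 0; that is, no nonnegative integer is the largest integer with exactly m+1 representations by (a_1, a_2, m·a_1·a_2) because no nonnegative integer has exactly m+1 such representations. -/

import Mathlib

/-- The number of representations of `M` by the tuple `a` (nonnegative coefficients). -/
noncomputable def repCount {k : ℕ} (a : Fin k → ℕ) (M : ℕ) : ℕ :=
  Nat.card {x : Fin k → ℕ // ∑ i, a i * x i = M}

/-- The `j`-Frobenius number: the greatest integer with exactly `j` representations
by `a` if such an integer exists, and `0` otherwise. -/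
noncomputable def gFrob {k : ℕ} (a : Fin k → ℕ) (j : ℕ) : ℕ :=
  sSup {M : ℕ | repCount a M = j}

/-! Write `r N` for the number of representations of `N` by `(a₁, a₂)` and `R N` for those by
`(a₁, a₂, c)` with `c = m a₁ a₂`. Splitting on whether the last coordinate vanishes gives
`R N = r N` for `N < c` and `R (N + c) = R N + r (N + c)`. By coprimality exactly one
representation of `N + a₁ a₂` has `x₁ < a₂`; the others are those of `N` shifted by
`x₁ ↦ x₁ + a₂`. So `r (N + a₁ a₂) = r N + 1` and `r N ≤ ⌊N / a₁ a₂⌋ + 1`. Hence `R N ≤ m` for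
`N < c`, `R (N + c) = 2 r N + m` has the wrong parity to be `m + 1`, and `R (N + 2c) ≥ 3m`. -/

open Finset

section Snoc

variable {k : ℕ}

lemma finite_repSet {a : Fin k → ℕ} (ha : ∀ i, 0 < a i) (M : ℕ) :
    Finite {x : Fin k → ℕ // ∑ i, a i * x i = M} :=
  Set.Finite.to_subtype <| (Set.finite_Iic fun _ => M).subset fun x (hx : _ = M) i =>
    (Nat.le_mul_of_pos_left _ (ha i)).trans <|
      hx ▸ single_le_sum (fun j _ => Nat.zero_le (a j * x j)) (mem_univ i)

def repSetSnocEquiv (a : Fin k → ℕ) (c M : ℕ) :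
    {x : Fin (k + 1) → ℕ // ∑ i, Fin.snoc (α := fun _ ↦ ℕ) a c i * x i = M} ≃
      {p : ℕ × (Fin k → ℕ) // ∑ i, a i * p.2 i + c * p.1 = M} :=
  ((Fin.snocEquiv fun _ => ℕ).subtypeEquiv fun p => by simp [Fin.sum_univ_castSucc]).symm

def repSetSnocAddEquiv (a : Fin k → ℕ) (c n : ℕ) :
    {p : ℕ × (Fin k → ℕ) // ∑ i, a i * p.2 i + c * p.1 = n + c} ≃
      {y : Fin k → ℕ // ∑ i, a i * y i = n + c} ⊕
        {p : ℕ × (Fin k → ℕ) // ∑ i, a i * p.2 i + c * p.1 = n} where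
  toFun
    | ⟨(0, y), h⟩ => .inl ⟨y, by simpa using h⟩
    | ⟨(t + 1, y), h⟩ => .inr ⟨(t, y), by dsimp only at h ⊢; rw [mul_add_one] at h; omega⟩
  invFun
    | .inl ⟨y, h⟩ => ⟨(0, y), by simpa using h⟩
    | .inr ⟨(t, y), h⟩ => ⟨(t + 1, y), by dsimp only at h ⊢; rw [mul_add_one]; omega⟩
  left_inv := by rintro ⟨⟨_ | t, y⟩, h⟩ <;> rfl
  right_inv := by rintro (⟨y, h⟩ | ⟨⟨t, y⟩, h⟩) <;> rfl

lemma repCount_snoc_of_lt (a : Fin k → ℕ) {c M : ℕ} (hM : M < c) :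
    repCount (Fin.snoc (α := fun _ ↦ ℕ) a c) M = repCount a M := by
  have last_eq_zero (p : ℕ × (Fin k → ℕ)) (hp : ∑ i, a i * p.2 i + c * p.1 = M) : p.1 = 0 := by
    by_contra h
    have := Nat.le_mul_of_pos_right c (Nat.pos_of_ne_zero h)
    omega
  refine Nat.card_congr <| (repSetSnocEquiv a c M).trans
    { toFun := fun p => ⟨p.1.2, by simpa [last_eq_zero p.1 p.2] using p.2⟩
      invFun := fun y => ⟨(0, y.1), by simpa using y.2⟩
      left_inv := fun p => Subtype.ext <| Prod.ext (last_eq_zero p.1 p.2).symm rfl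
      right_inv := fun _ => rfl }

lemma repCount_snoc_add {a : Fin k → ℕ} (ha : ∀ i, 0 < a i) {c : ℕ} (hc : 0 < c) (n : ℕ) :
    repCount (Fin.snoc (α := fun _ ↦ ℕ) a c) (n + c) =
      repCount (Fin.snoc (α := fun _ ↦ ℕ) a c) n + repCount a (n + c) := by
  have : Finite {p : ℕ × (Fin k → ℕ) // ∑ i, a i * p.2 i + c * p.1 = n} :=
    have := finite_repSet (a := Fin.snoc (α := fun _ ↦ ℕ) a c)
      (Fin.lastCases (by simpa using hc) (by simpa using ha)) n
    .of_equiv _ (repSetSnocEquiv a c n)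
  have := finite_repSet ha (n + c)
  rw [repCount, repCount, repCount,
    Nat.card_congr ((repSetSnocEquiv a c _).trans (repSetSnocAddEquiv a c n)), Nat.card_sum,
    Nat.card_congr (repSetSnocEquiv a c n), add_comm]

end Snoc

section Pair

variable {a1 a2 : ℕ}

lemma repCount_pair (a1 a2 N : ℕ) :
    repCount ![a1, a2] N = Nat.card {p : ℕ × ℕ // a1 * p.1 + a2 * p.2 = N} :=
  Nat.card_congr <| (finTwoArrowEquiv ℕ).subtypeEquiv fun x => by simp [Fin.sum_univ_two]

lemma finite_pairs (ha1 : 0 < a1) (ha2 : 0 < a2) (N : ℕ) :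
    Finite {p : ℕ × ℕ // a1 * p.1 + a2 * p.2 = N} :=
  Set.Finite.to_subtype <| (Set.finite_Iic (N, N)).subset fun p (hp : _ = N) =>
    show p.1 ≤ N ∧ p.2 ≤ N from
      ⟨(Nat.le_mul_of_pos_left _ ha1).trans (by omega),
       (Nat.le_mul_of_pos_left _ ha2).trans (by omega)⟩

lemma eq_of_mul_add_mul_eq (hcop : Nat.Coprime a1 a2) {x y x' y' : ℕ} (hx : x < a2)
    (hx' : x' < a2) (h : a1 * x + a2 * y = a1 * x' + a2 * y') : x = x' ∧ y = y' := by
  have hmod : a1 * x ≡ a1 * x' [MOD a2] := by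
    simpa [Nat.ModEq, Nat.add_mul_mod_self_left] using congrArg (· % a2) h
  have hxx' : x % a2 = x' % a2 := hmod.cancel_left_of_coprime hcop.symm
  rw [Nat.mod_eq_of_lt hx, Nat.mod_eq_of_lt hx'] at hxx'
  subst hxx'
  exact ⟨rfl, Nat.eq_of_mul_eq_mul_left (Nat.zero_lt_of_lt hx) (by omega)⟩

lemma subsingleton_pairs_of_lt (hcop : Nat.Coprime a1 a2) {N : ℕ} (hN : N < a1 * a2) :
    Subsingleton {p : ℕ × ℕ // a1 * p.1 + a2 * p.2 = N} := by
  have fst_lt (p : ℕ × ℕ) (hp : a1 * p.1 + a2 * p.2 = N) : p.1 < a2 :=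
    Nat.lt_of_mul_lt_mul_left (a := a1) (by omega)
  refine ⟨fun ⟨p, hp⟩ ⟨q, hq⟩ => Subtype.ext <| Prod.ext_iff.mpr ?_⟩
  exact eq_of_mul_add_mul_eq hcop (fst_lt p hp) (fst_lt q hq) (hp.trans hq.symm)

lemma card_pairs_fst_lt (ha2 : 0 < a2) (hcop : Nat.Coprime a1 a2) (N : ℕ) :
    Nat.card {z : {p : ℕ × ℕ // a1 * p.1 + a2 * p.2 = N + a1 * a2} // z.1.1 < a2} = 1 := by
  have : Subsingleton {z : {p : ℕ × ℕ // a1 * p.1 + a2 * p.2 = N + a1 * a2} // z.1.1 < a2} :=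
    ⟨fun ⟨⟨p, hp⟩, hp'⟩ ⟨⟨q, hq⟩, hq'⟩ => by
      obtain ⟨h1, h2⟩ := eq_of_mul_add_mul_eq hcop hp' hq' (hp.trans hq.symm)
      exact Subtype.ext <| Subtype.ext <| Prod.ext h1 h2⟩
  obtain ⟨x, hx, hmod⟩ := Nat.exists_mul_mod_eq_of_coprime (N + a1 * a2) hcop ha2.ne'
  have hle : a1 * x ≤ N + a1 * a2 := by have := Nat.mul_le_mul_left a1 hx.le; omega
  obtain ⟨y, hy⟩ := (Nat.modEq_iff_dvd' hle).mp hmod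
  have : Nonempty {z : {p : ℕ × ℕ // a1 * p.1 + a2 * p.2 = N + a1 * a2} // z.1.1 < a2} :=
    ⟨⟨⟨(x, y), by dsimp only; omega⟩, hx⟩⟩
  exact Nat.card_unique

def pairsShiftEquiv (a1 a2 N : ℕ) :
    {z : {p : ℕ × ℕ // a1 * p.1 + a2 * p.2 = N + a1 * a2} // ¬z.1.1 < a2} ≃
      {p : ℕ × ℕ // a1 * p.1 + a2 * p.2 = N} where
  toFun z := ⟨(z.1.1.1 - a2, z.1.1.2), by
    obtain ⟨⟨⟨x, y⟩, h⟩, hx⟩ := z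
    obtain ⟨d, rfl⟩ := Nat.exists_eq_add_of_le (not_lt.mp hx)
    dsimp only at h ⊢
    rw [Nat.add_sub_cancel_left]
    linarith⟩
  invFun p := ⟨⟨(p.1.1 + a2, p.1.2), by dsimp only; rw [mul_add]; linarith [p.2]⟩, by simp⟩
  left_inv z := by
    obtain ⟨⟨⟨x, y⟩, h⟩, hx⟩ := z
    simp only [not_lt] at hx
    simp [Nat.sub_add_cancel hx]
  right_inv p := by simp

lemma card_pairs_add_mul (ha1 : 0 < a1) (ha2 : 0 < a2) (hcop : Nat.Coprime a1 a2) (N : ℕ) :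
    Nat.card {p : ℕ × ℕ // a1 * p.1 + a2 * p.2 = N + a1 * a2} =
      Nat.card {p : ℕ × ℕ // a1 * p.1 + a2 * p.2 = N} + 1 := by
  have := finite_pairs ha1 ha2 (N + a1 * a2)
  rw [← Nat.card_congr (Equiv.sumCompl fun z : {p : ℕ × ℕ // _} => z.1.1 < a2), Nat.card_sum,
    card_pairs_fst_lt ha2 hcop, Nat.card_congr (pairsShiftEquiv a1 a2 N), add_comm]

lemma repCount_pair_add_mul (ha1 : 0 < a1) (ha2 : 0 < a2) (hcop : Nat.Coprime a1 a2)
    (N k : ℕ) : repCount ![a1, a2] (N + k * (a1 * a2)) = repCount ![a1, a2] N + k := by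
  induction k with
  | zero => simp
  | succ k ih =>
    rw [Nat.succ_mul, ← add_assoc, repCount_pair, card_pairs_add_mul ha1 ha2 hcop,
      ← repCount_pair, ih, add_assoc]

lemma repCount_pair_le (ha1 : 0 < a1) (ha2 : 0 < a2) (hcop : Nat.Coprime a1 a2) (N : ℕ) :
    repCount ![a1, a2] N ≤ N / (a1 * a2) + 1 := by
  have hp : 0 < a1 * a2 := Nat.mul_pos ha1 ha2
  have : Subsingleton {p : ℕ × ℕ // a1 * p.1 + a2 * p.2 = N % (a1 * a2)} :=
    subsingleton_pairs_of_lt hcop (Nat.mod_lt N hp)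
  have hle : repCount ![a1, a2] (N % (a1 * a2)) ≤ 1 := by
    rw [repCount_pair]; exact Finite.card_le_one_iff_subsingleton.mpr this
  rw [← Nat.mod_add_div' N (a1 * a2), repCount_pair_add_mul ha1 ha2 hcop,
    Nat.mod_add_div' N (a1 * a2)]
  omega

end Pair

theorem repCount_triple_ne {a1 a2 : ℕ} (ha1 : 0 < a1) (ha2 : 0 < a2) (hcop : Nat.Coprime a1 a2)
    {m : ℕ} (hm : 0 < m) (n : ℕ) : repCount ![a1, a2, m * a1 * a2] n ≠ m + 1 := by
  set c := m * a1 * a2 with hc_def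
  have hc : 0 < c := by positivity
  have hsnoc : ![a1, a2, c] = Fin.snoc (α := fun _ ↦ ℕ) ![a1, a2] c := by
    ext i; fin_cases i <;> rfl
  have hpos : ∀ i, 0 < ![a1, a2] i := by simp [Fin.forall_fin_two, ha1, ha2]
  have shift (N : ℕ) : repCount ![a1, a2] (N + c) = repCount ![a1, a2] N + m := by
    rw [← repCount_pair_add_mul ha1 ha2 hcop, hc_def, mul_assoc]
  rw [hsnoc]
  rcases lt_or_ge n c with hn | hn
  · have hq : n / (a1 * a2) < m := Nat.div_lt_of_lt_mul (by rwa [mul_comm, ← mul_assoc])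
    have := repCount_pair_le ha1 ha2 hcop n
    rw [repCount_snoc_of_lt _ hn]
    omega
  obtain ⟨n, rfl⟩ := Nat.exists_eq_add_of_le' hn
  rcases lt_or_ge n c with hn | hn
  · rw [repCount_snoc_add hpos hc, repCount_snoc_of_lt _ hn, shift]
    omega
  obtain ⟨n, rfl⟩ := Nat.exists_eq_add_of_le' hn
  rw [repCount_snoc_add hpos hc, repCount_snoc_add hpos hc]
  simp only [shift]
  omega

/-- Second part of the Corollary: `g_{m+1}(a₁, a₂, m·a₁·a₂) = 0`, because no
nonnegative integer has exactly `m + 1` representations by `(a₁, a₂, m·a₁·a₂)`. -/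
theorem gFrob_succ_of_triple (a1 a2 : ℕ) (ha1 : 0 < a1) (ha2 : 0 < a2)
    (hcop : Nat.Coprime a1 a2) (m : ℕ) (hm : 0 < m) :
    gFrob ![a1, a2, m * a1 * a2] (m + 1) = 0 ∧
      ∀ n : ℕ, repCount ![a1, a2, m * a1 * a2] n ≠ m + 1 := by
  have hne := repCount_triple_ne ha1 ha2 hcop hm
  refine ⟨?_, hne⟩
  have hempty : {M | repCount ![a1, a2, m * a1 * a2] M = m + 1} = ∅ :=
    Set.eq_empty_of_forall_notMem hne
  rw [gFrob, hempty, csSup_empty]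
  rfl
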